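/- Let $F$ be a strictly increasing continuous CDF on $\mathbb{R}$ with population mean $\kappa_1$ and standard deviation $\kappa_2 > 0$. Fix true parameters $\mu \in \mathbb{R}, \sigma > 0$ and time $t > 0$, and set $r = 1 - F((\log t - \mu)/\sigma)$. Given data $x_1,\dots,x_n$ with sample mean $\bar x$ and sample standard deviation $s > 0$, define $\hat\sigma = s/\kappa_2$, $\hat\mu = \bar x - \kappa_1 \hat\sigma$, and $\hat r = 1 - F((\log t - \hat\mu)/\hat\sigma)$. Let $\bar Z = (\bar x - \mu)/\sigma$ and $M = s/\sigma$. Then $\hat r = 1 - F\big( \{F^{-1}(1-r) - \bar Z\}\, \kappa_2 / M + \kappa_1 \big)$. -/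
import Mathlib

/-- Pivotal identity for the moment-based reliability estimator in a log-location-scale
family: with `r = 1 - F((log t - μ)/σ)`, `σ̂ = s/κ₂`, `μ̂ = x̄ - κ₁ σ̂`,
`r̂ = 1 - F((log t - μ̂)/σ̂)`, `Z̄ = (x̄ - μ)/σ` and `M = s/σ`, one has
`r̂ = 1 - F({F⁻¹(1-r) - Z̄} κ₂ / M + κ₁)`. -/
theorem moment_estimator_pivotal
    (F Finv : ℝ → ℝ) (hFmono : StrictMono F) (hFcont : Continuous F)
    (hFrange : ∀ x, F x ∈ Set.Icc (0 : ℝ) 1)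
    (hinv : Function.LeftInverse Finv F)
    (κ₁ κ₂ : ℝ) (hκ₂ : 0 < κ₂)
    (μ σ t : ℝ) (hσ : 0 < σ) (ht : 0 < t)
    (xbar s : ℝ) (hs : 0 < s) :
    (fun r σh => (fun μh => (fun rh Zbar M =>
        rh = 1 - F ((Finv (1 - r) - Zbar) * κ₂ / M + κ₁))
      (1 - F ((Real.log t - μh) / σh)) ((xbar - μ) / σ) (s / σ))
      (xbar - κ₁ * (s / κ₂)))
    (1 - F ((Real.log t - μ) / σ)) (s / κ₂) := by
  simp only [sub_sub_cancel, hinv ((Real.log t - μ) / σ)]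
  congr 2
  field_simp
  ring
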